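/- arXiv:2302.05509 — 3 statements merged into one kernel-verified Lean document; each statement's English description precedes it below -/
import Mathlib

section
/- Let E, F be finite sets, d ≥ 1, and A = (α_k : E → F)_{k=0}^n a tuple of injective maps with pairwise disjoint images. Let Φ be an oriented tropical Plücker vector of rank d on E. Then for every t = (t₀,…,t_n) in the standard n-simplex (t_k ≥ 0, Σ t_k = 1), the slide Φ_t^A is an oriented tropical Plücker vector of rank d on F. Moreover, when t is the k-th vertex of the simplex (t_k = 1, t_ℓ = 0 for ℓ ≠ k), one has Φ_t^A = (α_k)_*Φ. -/
open Finset

noncomputable section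

/-! ### Alternating functions and oriented tropical Plücker vectors -/

/-- A function `Φ : E^d → ℝ` is alternating. -/
def IsAlternating {E : Type*} {d : ℕ} (Φ : (Fin d → E) → ℝ) : Prop :=
  (∀ (σ : Equiv.Perm (Fin d)) (x : Fin d → E),
      Φ (x ∘ σ) = ((Equiv.Perm.sign σ : ℤ) : ℝ) * Φ x) ∧
  ∀ x : Fin d → E, ¬ Function.Injective x → Φ x = 0

/-- The `i`-th term `(-1)^i · Φ(x₁,…,x̂ᵢ,…,x_{d+1}) · Φ(xᵢ,y₁,…,y_{d-1})` of the
oriented (tropical) Plücker relation attached to tuples `X ∈ E^{d+1}`, `Y ∈ E^{d-1}`. -/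
def delTerm {E : Type*} {d n : ℕ} (hn : d = n + 1) (Φ : (Fin d → E) → ℝ)
    (X : Fin (d + 1) → E) (Y : Fin n → E) (i : Fin (d + 1)) : ℝ :=
  (-1 : ℝ) ^ (i : ℕ) * Φ (X ∘ i.succAbove) * Φ (Fin.cons (X i) Y ∘ Fin.cast hn)

/-- `Φ : E^d → ℝ` is an oriented tropical Plücker vector of rank `d` on `E`:
it is alternating, not identically zero, and for every `X ∈ E^{d+1}`, `Y ∈ E^{d-1}`
the list of terms of the Plücker relation is identically zero or its maximum absolute
value is attained both at a positive entry and at a negative entry. -/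
def IsOrientedTP {E : Type*} (d : ℕ) (Φ : (Fin d → E) → ℝ) : Prop :=
  IsAlternating Φ ∧ (∃ x, Φ x ≠ 0) ∧
  ∀ (n : ℕ) (hn : d = n + 1) (X : Fin (d + 1) → E) (Y : Fin n → E),
    (∀ i, delTerm hn Φ X Y i = 0) ∨
    ∃ ip im : Fin (d + 1),
      0 < delTerm hn Φ X Y ip ∧ delTerm hn Φ X Y im < 0 ∧
      (∀ k, |delTerm hn Φ X Y k| ≤ delTerm hn Φ X Y ip) ∧
      ∀ k, |delTerm hn Φ X Y k| ≤ -delTerm hn Φ X Y im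

/-- `M̃(d,E)`: the space of oriented tropical Plücker vectors of rank `d` on `E`,
as a subset of `ℝ^{E^d}`. -/
def Mt (d : ℕ) (E : Type*) : Set ((Fin d → E) → ℝ) := {Φ | IsOrientedTP d Φ}

open Classical in
/-- Pushforward of `Φ : E^d → ℝ` along an (injective) map `α : E → F`. -/
noncomputable def pushforward {E F : Type*} {d : ℕ} (α : E → F) (Φ : (Fin d → E) → ℝ) :
    (Fin d → F) → ℝ :=
  fun y => if h : ∃ x : Fin d → E, ∀ i, y i = α (x i) then Φ h.choose else 0

/-! ### Finsets, ordered tuples, evaluation -/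

/-- The increasing enumeration of a `d`-element finite subset of a linearly ordered set. -/
def finsetTuple {E : Type*} [LinearOrder E] {d : ℕ} (B : Finset E) (h : B.card = d) :
    Fin d → E :=
  fun i => (B.orderIsoOfFin h i : E)

/-- Evaluation of an alternating function on a finite set, via its increasing enumeration
(and `0` if the set does not have the right cardinality). -/
noncomputable def evalOn {E : Type*} [LinearOrder E] {d : ℕ} (χ : (Fin d → E) → ℝ)
    (B : Finset E) : ℝ :=
  if h : B.card = d then χ (finsetTuple B h) else 0

/-! ### Tropical numbers and valuated matroids -/

/-- `−log|x| ∈ 𝕋 = ℝ ∪ {∞}` (with `−log 0 = ∞`). -/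
noncomputable def negLogAbs (x : ℝ) : WithTop ℝ :=
  if x = 0 then ⊤ else ((- Real.log |x| : ℝ) : WithTop ℝ)

/-- The map `𝕋 → ℝ`, `x ↦ e^{−x}` (with `∞ ↦ 0`); it is injective with image `[0,∞)`,
so the topology on `𝕋` making it a homeomorphism onto `[0,∞)` is the topology induced by it. -/
noncomputable def tropToReal : WithTop ℝ → ℝ :=
  WithTop.recTopCoe 0 fun r => Real.exp (-r)

/-- `I_φ(X,Y)`: the set of `i ∈ X \ Y` attaining the minimum of `φ(X∖{i}) + φ(Y∪{i})`. -/
def argminSet {E : Type*} [DecidableEq E] (φ : Finset E → WithTop ℝ) (X Y : Finset E) :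
    Set E :=
  {i | i ∈ X \ Y ∧ ∀ j ∈ X \ Y,
    φ (X.erase i) + φ (insert i Y) ≤ φ (X.erase j) + φ (insert j Y)}

/-- `φ` is a tropical Plücker vector of rank `d`: not identically `∞` on `binom(E,d)`,
and each `I_φ(X,Y)` has cardinality at least `2`. -/
def IsTropPlucker {E : Type*} [DecidableEq E] (d : ℕ) (φ : Finset E → WithTop ℝ) : Prop :=
  (∃ B : Finset E, B.card = d ∧ φ B ≠ ⊤) ∧
  ∀ X Y : Finset E, X.card = d + 1 → Y.card = d - 1 →
    ∃ i ∈ argminSet φ X Y, ∃ j ∈ argminSet φ X Y, i ≠ j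

/-- The (tropical) Plücker coordinates `B ↦ −log|Φ(B)|` of `Φ`. -/
noncomputable def tropOf {E : Type*} [LinearOrder E] {d : ℕ} (Φ : (Fin d → E) → ℝ) :
    Finset E → WithTop ℝ :=
  fun B => negLogAbs (evalOn Φ B)

/-! ### Chirotopes -/

/-- A chirotope of rank `d` on `E`: an alternating `{−1,0,+1}`-valued function,
not identically zero, satisfying the chirotope exchange condition. -/
def IsChirotope {E : Type*} (d : ℕ) (χ : (Fin d → E) → ℝ) : Prop :=
  (∀ x, χ x = -1 ∨ χ x = 0 ∨ χ x = 1) ∧ IsAlternating χ ∧ (∃ x, χ x ≠ 0) ∧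
  ∀ (n : ℕ) (hn : d = n + 1) (X : Fin (d + 1) → E) (Y : Fin n → E),
    (∀ k, delTerm hn χ X Y k = 0) ∨
    ((∃ k, delTerm hn χ X Y k = 1) ∧ ∃ k, delTerm hn χ X Y k = -1)

/-- Compatibility of a chirotope `χ` with a tropical Plücker vector `φ`:
`φ(B) = ∞` iff `χ(B) = 0`, and for every `X ∈ binom(E,d+1)`, `Y ∈ binom(E,d-1)`
(listed in increasing order) there exist indices `i, j` in the argmin set such that the
corresponding chirotope terms have opposite signs. -/
def ChiCompat {E : Type*} [LinearOrder E] (d : ℕ) (χ : (Fin d → E) → ℝ)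
    (φ : Finset E → WithTop ℝ) : Prop :=
  (∀ B : Finset E, B.card = d → (φ B = ⊤ ↔ evalOn χ B = 0)) ∧
  ∀ (n : ℕ) (hn : d = n + 1) (X Y : Finset E) (hX : X.card = d + 1) (hY : Y.card = n),
    ∃ i j : Fin (d + 1),
      (∀ k : Fin (d + 1),
        φ (X.erase (finsetTuple X hX i)) + φ (insert (finsetTuple X hX i) Y) ≤
          φ (X.erase (finsetTuple X hX k)) + φ (insert (finsetTuple X hX k) Y)) ∧
      (∀ k : Fin (d + 1),
        φ (X.erase (finsetTuple X hX j)) + φ (insert (finsetTuple X hX j) Y) ≤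
          φ (X.erase (finsetTuple X hX k)) + φ (insert (finsetTuple X hX k) Y)) ∧
      0 < delTerm hn χ (finsetTuple X hX) (finsetTuple Y hY) i ∧
      delTerm hn χ (finsetTuple X hX) (finsetTuple Y hY) j < 0

/-! ### The cells `C(p,I)` of the Dressian -/

/-- Membership in the cell `C(p,I)`: a tropical Plücker vector with underlying matroid `p`
and initial datum `I`. -/
def IsInC {E : Type*} [DecidableEq E] (d : ℕ) (p : Finset E → Bool)
    (I : Finset E → Finset E → Set E) (φ : Finset E → WithTop ℝ) : Prop :=
  IsTropPlucker d φ ∧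
  (∀ B : Finset E, B.card = d → (p B = true ↔ φ B ≠ ⊤)) ∧
  ∀ X Y : Finset E, X.card = d + 1 → Y.card = d - 1 → argminSet φ X Y = I X Y

/-- The support (set of bases) of a matroid `p : binom(E,d) → {0,1}`. -/
def suppSet {E : Type*} (d : ℕ) (p : Finset E → Bool) : Set (Finset E) :=
  {B | B.card = d ∧ p B = true}

open Classical in
/-- Extend a vector of finite coordinates on `supp(p)` to all of `binom(E,d)` by `∞`. -/
noncomputable def extendFin {E : Type*} (d : ℕ) (p : Finset E → Bool)
    (f : ↥(suppSet d p) → ℝ) : Finset E → WithTop ℝ :=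
  fun B => if h : B ∈ suppSet d p then ((f ⟨B, h⟩ : ℝ) : WithTop ℝ) else ⊤

/-- The cell `C(p,I)`, identified with a subset of `ℝ^{supp(p)}` by recording the finite
coordinates. -/
def CRealCoords {E : Type*} [DecidableEq E] (d : ℕ) (p : Finset E → Bool)
    (I : Finset E → Finset E → Set E) : Set (↥(suppSet d p) → ℝ) :=
  {f | IsInC d p I (extendFin d p f)}

/-- Extend `φ : binom(E,d) → 𝕋` to all finite subsets by `∞`. -/
noncomputable def extendTrop {E : Type*} (d : ℕ)
    (φ : {B : Finset E // B.card = d} → WithTop ℝ) : Finset E → WithTop ℝ :=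
  fun B => if h : B.card = d then φ ⟨B, h⟩ else ⊤

/-- The cell `C(p,I)` as a subset of `𝕋^{binom(E,d)}`. -/
def Cset {E : Type*} [DecidableEq E] (d : ℕ) (p : Finset E → Bool)
    (I : Finset E → Finset E → Set E) : Set ({B : Finset E // B.card = d} → WithTop ℝ) :=
  {φ | IsInC d p I (extendTrop d φ)}

/-- The set of tropical Plücker vectors inside `𝕋^{binom(E,d)}`. -/
def TPVset {E : Type*} [DecidableEq E] (d : ℕ) :
    Set ({B : Finset E // B.card = d} → WithTop ℝ) :=
  {φ | IsTropPlucker d (extendTrop d φ)}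

/-! ### Cells of the space of oriented valuated matroids -/

/-- The cell `D̃(χ,I)`: oriented tropical Plücker vectors with chirotope `χ` and
initial datum `I`. -/
def Dset {E : Type*} [LinearOrder E] (d : ℕ) (χ : (Fin d → E) → ℝ)
    (I : Finset E → Finset E → Set E) : Set ((Fin d → E) → ℝ) :=
  {Φ | IsOrientedTP d Φ ∧ (∀ x, Real.sign (Φ x) = χ x) ∧
    ∀ X Y : Finset E, X.card = d + 1 → Y.card = d - 1 → argminSet (tropOf Φ) X Y = I X Y}

/-- The Plücker coordinates of an alternating function, indexed by `binom(E,d)`. -/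
def toCoords {E : Type*} [LinearOrder E] (d : ℕ) (Φ : (Fin d → E) → ℝ) :
    {B : Finset E // B.card = d} → ℝ :=
  fun B => Φ (finsetTuple B.1 B.2)

/-- The cell `D̃(χ,I)` inside `ℝ^{binom(E,d)}`. -/
def DsetCoords {E : Type*} [LinearOrder E] (d : ℕ) (χ : (Fin d → E) → ℝ)
    (I : Finset E → Finset E → Set E) : Set ({B : Finset E // B.card = d} → ℝ) :=
  toCoords d '' Dset d χ I

/-- `M̃(d,E)` inside `ℝ^{binom(E,d)}`. -/
def MtCoords {E : Type*} [LinearOrder E] (d : ℕ) :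
    Set ({B : Finset E // B.card = d} → ℝ) :=
  toCoords d '' Mt d E

open Classical in
/-- The underlying matroid `|χ|` of a chirotope, as `binom(E,d) → {0,1}`. -/
noncomputable def chiSupp {E : Type*} [LinearOrder E] {d : ℕ} (χ : (Fin d → E) → ℝ) :
    Finset E → Bool :=
  fun B => if evalOn χ B = 0 then false else true

/-- Compatibility of an initial datum `I` with a chirotope `χ`. -/
def InitCompat {E : Type*} [LinearOrder E] (d : ℕ)
    (I : Finset E → Finset E → Set E) (χ : (Fin d → E) → ℝ) : Prop :=
  (∃ φ : Finset E → WithTop ℝ, IsTropPlucker d φ ∧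
      (∀ B : Finset E, B.card = d → (φ B ≠ ⊤ ↔ evalOn χ B ≠ 0)) ∧
      ∀ X Y : Finset E, X.card = d + 1 → Y.card = d - 1 → argminSet φ X Y = I X Y) ∧
  ∀ (n : ℕ) (hn : d = n + 1) (X Y : Finset E) (hX : X.card = d + 1) (hY : Y.card = n),
    (∀ k, delTerm hn χ (finsetTuple X hX) (finsetTuple Y hY) k = 0) ∨
    ∃ kp km : Fin (d + 1),
      finsetTuple X hX kp ∈ I X Y ∧ finsetTuple X hX km ∈ I X Y ∧
      delTerm hn χ (finsetTuple X hX) (finsetTuple Y hY) kp = 1 ∧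
      delTerm hn χ (finsetTuple X hX) (finsetTuple Y hY) km = -1

/-- The maximal initial datum `I_max^χ` compatible with a chirotope `χ`. -/
def Imax {E : Type*} [LinearOrder E] (d : ℕ) (χ : (Fin d → E) → ℝ) :
    Finset E → Finset E → Set E :=
  fun X Y => {x | x ∈ X \ Y ∧ |evalOn χ (X.erase x)| * |evalOn χ (insert x Y)| ≠ 0}

/-! ### The MacPhersonian as a preordered set -/

/-- `τ` is a specialization of `χ`: each Plücker coordinate of `τ` is the corresponding
coordinate of `χ` or `0`. -/
def SpecRel {E : Type*} [LinearOrder E] (d : ℕ) (χ τ : (Fin d → E) → ℝ) : Prop :=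
  ∀ B : Finset E, B.card = d → evalOn τ B = evalOn χ B ∨ evalOn τ B = 0

/-- The equivalence `χ ∼ −χ` on functions `E^d → ℝ`. -/
def ChiSetoid (E : Type*) (d : ℕ) : Setoid ((Fin d → E) → ℝ) where
  r χ τ := τ = χ ∨ τ = -χ
  iseqv := by
    refine ⟨fun x => Or.inl rfl, ?_, ?_⟩
    · rintro x y (rfl | rfl)
      · exact Or.inl rfl
      · exact Or.inr (neg_neg x).symm
    · rintro x y z (rfl | rfl) (rfl | rfl)
      · exact Or.inl rfl
      · exact Or.inr rfl
      · exact Or.inr rfl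
      · exact Or.inl (neg_neg x)

/-- The MacPhersonian: elements are equivalence classes `[χ]` of chirotopes of rank `d` on
`E` under `χ ∼ −χ`. -/
def MacP (E : Type*) (d : ℕ) : Type _ :=
  {q : Quotient (ChiSetoid E d) // ∃ χ, IsChirotope d χ ∧ Quotient.mk (ChiSetoid E d) χ = q}

lemma evalOn_neg {E : Type*} [LinearOrder E] {d : ℕ} (χ : (Fin d → E) → ℝ) (B : Finset E) :
    evalOn (-χ) B = -evalOn χ B := by
  unfold evalOn
  split <;> simp

/-- The specialization preorder on the MacPhersonian. -/
instance MacP.instPreorder (E : Type*) [LinearOrder E] (d : ℕ) : Preorder (MacP E d) where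
  le x y := ∃ a b : (Fin d → E) → ℝ,
    Quotient.mk (ChiSetoid E d) a = x.1 ∧ Quotient.mk (ChiSetoid E d) b = y.1 ∧ SpecRel d a b
  le_refl x := by
    obtain ⟨χ, hχ, hq⟩ := x.2
    exact ⟨χ, χ, hq, hq, fun B _ => Or.inl rfl⟩
  le_trans x y z hxy hyz := by
    obtain ⟨a, b, ha, hb, hab⟩ := hxy
    obtain ⟨b', c, hb', hc, hbc⟩ := hyz
    have comp : ∀ {u v w : (Fin d → E) → ℝ}, SpecRel d u v → SpecRel d v w → SpecRel d u w := by
      intro u v w h1 h2 B hB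
      rcases h2 B hB with h | h
      · rw [h]; exact h1 B hB
      · exact Or.inr h
    have hneg : ∀ {u v : (Fin d → E) → ℝ}, SpecRel d u v → SpecRel d (-u) (-v) := by
      intro u v h B hB
      rw [evalOn_neg, evalOn_neg]
      rcases h B hB with h1 | h1
      · exact Or.inl (by rw [h1])
      · exact Or.inr (by rw [h1, neg_zero])
    have hbb' : b = b' ∨ b = -b' := Quotient.exact (hb'.trans hb.symm)
    rcases hbb' with h | h
    · subst h
      exact ⟨a, c, ha, hc, comp hab hbc⟩
    · have h1 : SpecRel d b (-c) := by
        have := hneg hbc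
        rwa [← h] at this
      refine ⟨a, -c, ha, ?_, comp hab h1⟩
      rw [← hc]
      exact Quotient.sound (Or.inr (neg_neg c).symm)

/-! ### Projectivizations -/

/-- The scaling equivalence on a subset `S ⊆ ℝ^ι`. -/
def scalingSetoid {ι : Type*} (S : Set (ι → ℝ)) : Setoid ↥S where
  r f g := ∃ c : ℝ, c ≠ 0 ∧ (g : ι → ℝ) = c • (f : ι → ℝ)
  iseqv := by
    refine ⟨fun f => ⟨1, one_ne_zero, (one_smul ℝ _).symm⟩, ?_, ?_⟩
    · rintro f g ⟨c, hc, h⟩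
      exact ⟨c⁻¹, inv_ne_zero hc, by rw [h, smul_smul, inv_mul_cancel₀ hc, one_smul]⟩
    · rintro f g h ⟨c, hc, h1⟩ ⟨c', hc', h2⟩
      exact ⟨c' * c, mul_ne_zero hc' hc, by rw [h2, h1, smul_smul]⟩

/-! ### Matroids on the ground set ℕ -/

/-- `Φ : ℕ^d → ℝ` is finitely supported. -/
def FinSupp (d : ℕ) (Φ : (Fin d → ℕ) → ℝ) : Prop :=
  ∃ S : Finset ℕ, ∀ x : Fin d → ℕ, (∃ i, x i ∉ S) → Φ x = 0

/-- `M̃(d,ℕ)`: finitely supported oriented tropical Plücker vectors of rank `d` on `ℕ`. -/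
def MtN (d : ℕ) : Set ((Fin d → ℕ) → ℝ) := {Φ | IsOrientedTP d Φ ∧ FinSupp d Φ}

/-- `M(d,ℕ)`: the projectivization of `M̃(d,ℕ)`, with the quotient topology. -/
abbrev MprojN (d : ℕ) := Quotient (scalingSetoid (MtN d))

/-- Transport along an equality of ranks. -/
def recast {m n : ℕ} (h : m = n) (Φ : (Fin m → ℕ) → ℝ) : (Fin n → ℕ) → ℝ :=
  fun y => Φ (y ∘ Fin.cast h)

/-! ### Matroid sliding -/

open Classical in
/-- The slide `Φ_t^A` of `Φ` along a tuple `A` of injective maps `E → F` with pairwise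
disjoint images, at a point `t` of the standard simplex. -/
noncomputable def slide {E F : Type*} {d n : ℕ} (A : Fin (n + 1) → E → F)
    (t : Fin (n + 1) → ℝ) (Φ : (Fin d → E) → ℝ) : (Fin d → F) → ℝ :=
  fun x =>
    if h : ∀ i, ∃ k e, x i = A k e then
      Φ (fun i => (h i).choose_spec.choose) *
        ∏ k : Fin (n + 1), t k ^ (Finset.univ.filter fun i : Fin d => ∃ e, x i = A k e).card
    else 0

/-! ### Direct sums -/

/-- `D` is the direct sum `Φ₁ ⊕ Φ₂`: the unique alternating function on
`(E₁ ⊔ E₂)^{d₁+d₂}` vanishing on tuples not having exactly `d₁` entries from `E₁` and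
`d₂` entries from `E₂`, and restricting to `(x,y) ↦ Φ₁(x)·Φ₂(y)` on `E₁^{d₁} × E₂^{d₂}`. -/
def IsDirectSum {E₁ E₂ : Type*} {d₁ d₂ : ℕ} (Φ₁ : (Fin d₁ → E₁) → ℝ)
    (Φ₂ : (Fin d₂ → E₂) → ℝ) (D : (Fin (d₁ + d₂) → E₁ ⊕ E₂) → ℝ) : Prop :=
  IsAlternating D ∧
  (∀ z : Fin (d₁ + d₂) → E₁ ⊕ E₂,
      ¬ ((Finset.univ.filter fun i => (z i).isLeft = true).card = d₁ ∧
          (Finset.univ.filter fun i => (z i).isRight = true).card = d₂) → D z = 0) ∧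
  ∀ (x : Fin d₁ → E₁) (y : Fin d₂ → E₂),
    D (Sum.elim (fun a => Sum.inl (x a)) (fun b => Sum.inr (y b)) ∘ finSumFinEquiv.symm) =
      Φ₁ x * Φ₂ y

/-! ### Tropical projective space -/

private lemma trop_add_cancel (w : WithTop ℝ) (lam : ℝ) :
    w = w + (lam : WithTop ℝ) + ((-lam : ℝ) : WithTop ℝ) := by
  induction w using WithTop.recTopCoe with
  | top => simp
  | coe r => rw [← WithTop.coe_add, ← WithTop.coe_add, WithTop.coe_inj]; ring

/-- The action of `(ℝ,+)` on `𝕋^n ∖ {(∞,…,∞)}` by simultaneous translation. -/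
def tropProjSetoid (n : ℕ) : Setoid {x : Fin n → WithTop ℝ // ∃ i, x i ≠ ⊤} where
  r x y := ∃ lam : ℝ, ∀ i, (y : Fin n → WithTop ℝ) i = x.1 i + (lam : WithTop ℝ)
  iseqv := by
    refine ⟨fun x => ⟨0, fun i => by simp⟩, ?_, ?_⟩
    · rintro x y ⟨lam, h⟩
      refine ⟨-lam, fun i => ?_⟩
      rw [h i]
      exact trop_add_cancel _ _
    · rintro x y z ⟨lam, h1⟩ ⟨mu, h2⟩
      refine ⟨lam + mu, fun i => ?_⟩
      rw [h2 i, h1 i, WithTop.coe_add, add_assoc]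

end

/-! On tuples all of whose entries lie in the images of the `α_k`, say `xᵢ = α_{κ(i)}(eᵢ)`, the
slide is `Φ(e) · ∏ᵢ t_{κ(i)}`, and the monomial is symmetric in the positions. Hence every term of a
Plücker relation of `Φ_t^A` is the corresponding term for `Φ` times one nonnegative factor
`∏ t_{κ(X)} · ∏ t_{κ(Y)}`, which preserves the tropical sign condition; if some entry lies outside
the images, every term vanishes. At the vertex `e_k` the monomial is `1` on tuples coming from `α_k`
and `0` on all others. -/

open Function

lemma injective_uncurry_of_disjoint_range {ι E F : Type*} {A : ι → E → F}
    (hinj : ∀ k, Injective (A k))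
    (hdisj : ∀ k l, k ≠ l → Disjoint (Set.range (A k)) (Set.range (A l))) :
    Injective (uncurry A) := by
  rintro ⟨k, e⟩ ⟨l, e'⟩ (h : A k e = A l e')
  obtain rfl | hkl := eq_or_ne k l
  · rw [hinj k h]
  · exact (Set.disjoint_left.mp (hdisj k l hkl) ⟨e, rfl⟩ ⟨e', h.symm⟩).elim

def IsTropicallyBalanced {ι : Type*} (a : ι → ℝ) : Prop :=
  (∀ i, a i = 0) ∨
    ∃ ip im, 0 < a ip ∧ a im < 0 ∧ (∀ k, |a k| ≤ a ip) ∧ ∀ k, |a k| ≤ -a im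

lemma IsTropicallyBalanced.const_mul {ι : Type*} {a : ι → ℝ} (ha : IsTropicallyBalanced a)
    {c : ℝ} (hc : 0 ≤ c) : IsTropicallyBalanced fun i => c * a i := by
  obtain hc | hc := hc.eq_or_lt
  · exact Or.inl fun i => by simp [← hc]
  obtain ha | ⟨ip, im, hp, hm, hip, him⟩ := ha
  · exact Or.inl fun i => by simp [ha i]
  refine Or.inr ⟨ip, im, mul_pos hc hp, mul_neg_of_pos_of_neg hc hm, fun k => ?_, fun k => ?_⟩
  · rw [abs_mul, abs_of_pos hc]
    exact mul_le_mul_of_nonneg_left (hip k) hc.le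
  · rw [abs_mul, abs_of_pos hc, ← mul_neg]
    exact mul_le_mul_of_nonneg_left (him k) hc.le

lemma isOrientedTP_iff {E : Type*} {d : ℕ} {Φ : (Fin d → E) → ℝ} :
    IsOrientedTP d Φ ↔ IsAlternating Φ ∧ (∃ x, Φ x ≠ 0) ∧
      ∀ (m : ℕ) (hm : d = m + 1) (X : Fin (d + 1) → E) (Y : Fin m → E),
        IsTropicallyBalanced (delTerm hm Φ X Y) :=
  Iff.rfl

lemma delTerm_eq_zero_of_mem_range {E : Type*} {d m : ℕ} (hm : d = m + 1)
    {Ψ : (Fin d → E) → ℝ} {e : E} (hΨ : ∀ x, e ∈ Set.range x → Ψ x = 0)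
    {X : Fin (d + 1) → E} {Y : Fin m → E} (he : e ∈ Set.range X ∨ e ∈ Set.range Y)
    (i : Fin (d + 1)) : delTerm hm Ψ X Y i = 0 := by
  subst hm
  have hcons : e = X i ∨ e ∈ Set.range Y → Ψ (Fin.cons (X i) Y ∘ Fin.cast rfl) = 0 := by
    rintro (rfl | ⟨j, rfl⟩)
    · exact hΨ _ ⟨0, rfl⟩
    · exact hΨ _ ⟨j.succ, rfl⟩
  unfold delTerm
  obtain ⟨i₀, rfl⟩ | he := he
  · obtain rfl | hi := eq_or_ne i i₀
    · rw [hcons (Or.inl rfl), mul_zero]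
    · obtain ⟨j, hj⟩ := Fin.exists_succAbove_eq hi.symm
      rw [hΨ (X ∘ i.succAbove) ⟨j, by rw [comp_apply, hj]⟩, mul_zero, zero_mul]
  · rw [hcons (Or.inr he), mul_zero]

lemma pushforward_comp {E F : Type*} {d : ℕ} {α : E → F} (hα : Injective α)
    (Φ : (Fin d → E) → ℝ) (y : Fin d → E) : pushforward α Φ (α ∘ y) = Φ y := by
  have h : ∃ x : Fin d → E, ∀ i, (α ∘ y) i = α (x i) := ⟨y, fun _ => rfl⟩
  rw [pushforward, dif_pos h]
  exact congrArg Φ (funext fun i => hα (h.choose_spec i).symm)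

lemma pushforward_eq_zero {E F : Type*} {d : ℕ} {α : E → F} (Φ : (Fin d → E) → ℝ)
    {x : Fin d → F} (hx : ¬ Set.range x ⊆ Set.range α) : pushforward α Φ x = 0 := by
  refine dif_neg fun ⟨y, hy⟩ => hx ?_
  rintro _ ⟨i, rfl⟩
  exact ⟨y i, (hy i).symm⟩

lemma exists_eq_comp_or_not_range_subset {α β γ : Type*} (f : α → γ) (g : β → γ) :
    (∃ h, f = g ∘ h) ∨ ¬ Set.range f ⊆ Set.range g := by
  rw [← Set.range_subset_range_iff_exists_comp]
  exact em _

section Slide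

variable {E F : Type*} {d n : ℕ} {A : Fin (n + 1) → E → F} (t : Fin (n + 1) → ℝ)
  (Φ : (Fin d → E) → ℝ)

lemma slide_eq_zero {x : Fin d → F} (hx : ¬ Set.range x ⊆ Set.range (uncurry A)) :
    slide A t Φ x = 0 := by
  refine dif_neg fun h => hx ?_
  rintro _ ⟨i, rfl⟩
  obtain ⟨k, e, he⟩ := h i
  exact ⟨(k, e), he.symm⟩

lemma slide_comp (hA : Injective (uncurry A)) (p : Fin d → Fin (n + 1) × E) :
    slide A t Φ (uncurry A ∘ p) = Φ (Prod.snd ∘ p) * ∏ i, t (p i).1 := by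
  classical
  have h : ∀ i, ∃ k e, (uncurry A ∘ p) i = A k e := fun i => ⟨(p i).1, (p i).2, rfl⟩
  have hchoose : ∀ i, ((h i).choose, (h i).choose_spec.choose) = p i := fun i =>
    @hA ((h i).choose, (h i).choose_spec.choose) (p i) (h i).choose_spec.choose_spec.symm
  rw [slide, dif_pos h]
  congr 1
  · exact congrArg Φ (funext fun i => congrArg Prod.snd (hchoose i))
  · rw [← Finset.prod_fiberwise' Finset.univ (fun i => (p i).1) t]
    refine Finset.prod_congr rfl fun k _ => ?_
    rw [Finset.prod_const]
    congr 2
    ext i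
    simp only [Finset.mem_filter, Finset.mem_univ, true_and]
    exact ⟨fun ⟨e, he⟩ => congrArg Prod.fst (@hA (p i) (k, e) he),
      fun hk => ⟨(p i).2, by rw [← hk]; rfl⟩⟩

lemma isAlternating_slide (hA : Injective (uncurry A)) (hΦ : IsAlternating Φ) :
    IsAlternating (slide A t Φ) := by
  refine ⟨fun σ x => ?_, fun x hx => ?_⟩
  · obtain ⟨p, rfl⟩ | hx := exists_eq_comp_or_not_range_subset x (uncurry A)
    · rw [comp_assoc, slide_comp t Φ hA, slide_comp t Φ hA, ← comp_assoc, hΦ.1 σ, mul_assoc]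
      exact congrArg _ (congrArg _ (Equiv.prod_comp σ fun i => t (p i).1))
    · have hxσ : ¬ Set.range (x ∘ σ) ⊆ Set.range (uncurry A) := by
        rwa [Set.range_comp, σ.range_eq_univ, Set.image_univ]
      rw [slide_eq_zero t Φ hx, slide_eq_zero t Φ hxσ, mul_zero]
  · obtain ⟨p, rfl⟩ | hx := exists_eq_comp_or_not_range_subset x (uncurry A)
    · rw [slide_comp t Φ hA, hΦ.2 _ fun hp => hx (hA.comp hp.of_comp), zero_mul]
    · exact slide_eq_zero t Φ hx

lemma exists_slide_ne_zero (hA : Injective (uncurry A)) (hΦ : ∃ x, Φ x ≠ 0)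
    (ht : ∃ k, t k ≠ 0) : ∃ x, slide A t Φ x ≠ 0 := by
  obtain ⟨y, hy⟩ := hΦ
  obtain ⟨k, hk⟩ := ht
  refine ⟨uncurry A ∘ fun i => (k, y i), ?_⟩
  rw [slide_comp t Φ hA]
  exact mul_ne_zero hy (Finset.prod_ne_zero_iff.2 fun _ _ => hk)

lemma delTerm_slide_comp (hA : Injective (uncurry A)) {m : ℕ} (hm : d = m + 1)
    (pX : Fin (d + 1) → Fin (n + 1) × E) (pY : Fin m → Fin (n + 1) × E) :
    delTerm hm (slide A t Φ) (uncurry A ∘ pX) (uncurry A ∘ pY) =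
      fun i => ((∏ j, t (pX j).1) * ∏ j, t (pY j).1) *
        delTerm hm Φ (Prod.snd ∘ pX) (Prod.snd ∘ pY) i := by
  subst hm
  funext i
  have hprod : (∏ j, t (pX (i.succAbove j)).1) * ∏ j, t ((Fin.cons (pX i) pY : _ → _) j).1 =
      (∏ j, t (pX j).1) * ∏ j, t (pY j).1 := by
    rw [Fin.prod_univ_succAbove _ i,
      Fin.prod_univ_succ fun j => t ((Fin.cons (pX i) pY : _ → _) j).1]
    simp only [Fin.cons_zero, Fin.cons_succ]
    ring
  unfold delTerm
  rw [comp_apply, comp_apply, ← Fin.comp_cons, ← Fin.comp_cons]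
  simp only [Fin.cast_refl, comp_id, comp_assoc]
  rw [slide_comp t Φ hA, slide_comp t Φ hA, ← hprod]
  simp only [comp_apply]
  ring

lemma delTerm_slide_eq_zero {m : ℕ} (hm : d = m + 1) {X : Fin (d + 1) → F} {Y : Fin m → F}
    (h : ¬ Set.range X ⊆ Set.range (uncurry A) ∨ ¬ Set.range Y ⊆ Set.range (uncurry A))
    (i : Fin (d + 1)) : delTerm hm (slide A t Φ) X Y i = 0 := by
  simp only [Set.not_subset] at h
  obtain ⟨e, he, heA⟩ | ⟨e, he, heA⟩ := h
  all_goals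
    refine delTerm_eq_zero_of_mem_range hm (e := e) (fun x hx => slide_eq_zero t Φ ?_) ?_ i
    · exact fun hsub => heA (hsub hx)
    · simp [he]

lemma isOrientedTP_slide (hA : Injective (uncurry A)) (ht : ∀ k, 0 ≤ t k)
    (ht₀ : ∃ k, t k ≠ 0) (hΦ : IsOrientedTP d Φ) : IsOrientedTP d (slide A t Φ) := by
  obtain ⟨hΦalt, hΦne, hΦbal⟩ := isOrientedTP_iff.1 hΦ
  refine isOrientedTP_iff.2 ⟨isAlternating_slide t Φ hA hΦalt,
    exists_slide_ne_zero t Φ hA hΦne ht₀, fun m hm X Y => ?_⟩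
  obtain ⟨pX, rfl⟩ | hX := exists_eq_comp_or_not_range_subset X (uncurry A)
  · obtain ⟨pY, rfl⟩ | hY := exists_eq_comp_or_not_range_subset Y (uncurry A)
    · rw [delTerm_slide_comp t Φ hA hm]
      exact (hΦbal m hm _ _).const_mul
        (mul_nonneg (Finset.prod_nonneg fun _ _ => ht _) (Finset.prod_nonneg fun _ _ => ht _))
    · exact Or.inl (delTerm_slide_eq_zero t Φ hm (Or.inr hY))
  · exact Or.inl (delTerm_slide_eq_zero t Φ hm (Or.inl hX))

lemma slide_vertex_eq_pushforward (hA : Injective (uncurry A)) (k : Fin (n + 1)) :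
    slide A (fun l => if l = k then 1 else 0) Φ = pushforward (A k) Φ := by
  funext x
  obtain ⟨p, rfl⟩ | hx := exists_eq_comp_or_not_range_subset x (uncurry A)
  · by_cases hk : ∀ i, (p i).1 = k
    · have hp : uncurry A ∘ p = A k ∘ (Prod.snd ∘ p) := funext fun i => by
        rw [comp_apply, ← hk i]
        rfl
      rw [slide_comp _ Φ hA, hp,
        pushforward_comp (α := A k) (hA.comp (Prod.mk_right_injective k))]
      simp [hk]
    · obtain ⟨i, hi⟩ := not_forall.1 hk
      rw [slide_comp _ Φ hA, Finset.prod_eq_zero (Finset.mem_univ i) (if_neg hi), mul_zero,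
        pushforward_eq_zero]
      intro hsub
      obtain ⟨e, he⟩ := hsub ⟨i, rfl⟩
      exact hi (congrArg Prod.fst (@hA (p i) (k, e) he.symm))
  · rw [slide_eq_zero _ Φ hx, pushforward_eq_zero]
    exact fun hsub => hx (hsub.trans (Set.range_comp_subset_range (Prod.mk k) (uncurry A)))

end Slide

theorem statement3_general {E F : Type*} (d : ℕ) (n : ℕ)
    (A : Fin (n + 1) → E → F) (hinj : ∀ k, Function.Injective (A k))
    (hdisj : ∀ k l, k ≠ l → Disjoint (Set.range (A k)) (Set.range (A l)))
    (Φ : (Fin d → E) → ℝ) (hΦ : IsOrientedTP d Φ) :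
    (∀ t : Fin (n + 1) → ℝ, (∀ k, 0 ≤ t k) → ∑ k, t k = 1 →
      IsOrientedTP d (slide A t Φ)) ∧
    ∀ k : Fin (n + 1),
      slide A (fun l => if l = k then 1 else 0) Φ = pushforward (A k) Φ := by
  have hA := injective_uncurry_of_disjoint_range hinj hdisj
  refine ⟨fun t ht hsum => isOrientedTP_slide t Φ hA ht ?_ hΦ,
    slide_vertex_eq_pushforward Φ hA⟩
  obtain ⟨k, -, hk⟩ := Finset.exists_ne_zero_of_sum_ne_zero (hsum ▸ one_ne_zero)
  exact ⟨k, hk⟩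

theorem statement3 {E F : Type*} [Fintype E] [Fintype F] (d : ℕ) (hd : 1 ≤ d) (n : ℕ)
    (A : Fin (n + 1) → E → F) (hinj : ∀ k, Function.Injective (A k))
    (hdisj : ∀ k l, k ≠ l → Disjoint (Set.range (A k)) (Set.range (A l)))
    (Φ : (Fin d → E) → ℝ) (hΦ : IsOrientedTP d Φ) :
    (∀ t : Fin (n + 1) → ℝ, (∀ k, 0 ≤ t k) → ∑ k, t k = 1 →
      IsOrientedTP d (slide A t Φ)) ∧
    ∀ k : Fin (n + 1),
      slide A (fun l => if l = k then 1 else 0) Φ = pushforward (A k) Φ :=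
  statement3_general d n A hinj hdisj Φ hΦ
end

section
/- Let E be a finite set, d ≥ 1, p : binom(E,d) → {0,1}, and I an initial datum. Identify C(p,I) with a subset of ℝ^{supp(p)} (where supp(p) = {B : p(B) = 1}) by recording the finite coordinates. Then C(p,I) ⊆ ℝ^{supp(p)} is convex, invariant under translation by λ·(1,…,1) for every λ ∈ ℝ, and invariant under multiplication by every positive real scalar. -/
open Finset

/-!
Each of the three operations changes the coordinates of `f ∈ C(p,I)` (of `f, g ∈ C(p,I)` for a
convex combination) by a real map, hence changes every sum `φ(X∖{i}) + φ(Y∪{i})` by a monotone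
map fixing `∞`. Membership in `C(p,I)` only depends on the support, which is `supp(p)` for every
point of `ℝ^{supp(p)}`, and on the argmin sets. Translations and positive dilations are strictly
monotone, so they keep the argmin sets. For a convex combination of `f` and `g`, which share their
argmin sets, a common minimiser still minimises the combination, while an index minimising neither
sum is beaten strictly in both by a common minimiser.
-/

theorem isMinOn_comp₂_iff {ι α β : Type*} [LinearOrder α] [Preorder β] {S : Set ι}
    {s t : ι → α} {K : α → α → β}
    (hK_mono : ∀ ⦃x x' y y'⦄, x ≤ x' → y ≤ y' → K x y ≤ K x' y')
    (hK_strict : ∀ ⦃x x' y y'⦄, x < x' → y < y' → K x y < K x' y')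
    (hst : ∀ i ∈ S, IsMinOn s S i ↔ IsMinOn t S i) (hne : ∃ i₀ ∈ S, IsMinOn s S i₀)
    {i : ι} (hi : i ∈ S) : IsMinOn (fun j => K (s j) (t j)) S i ↔ IsMinOn s S i := by
  refine ⟨fun hK => ?_, fun hs => ?_⟩
  · obtain ⟨i₀, hi₀, hs₀⟩ := hne
    have ht₀ := (hst i₀ hi₀).1 hs₀
    by_contra hs
    have hlt_of_not_min : ∀ u : ι → α, IsMinOn u S i₀ → ¬ IsMinOn u S i → u i₀ < u i := by
      intro u hu₀ hu
      obtain ⟨j, hj, hji⟩ := by simpa [isMinOn_iff] using hu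
      exact (isMinOn_iff.1 hu₀ j hj).trans_lt hji
    have hlt := hK_strict (hlt_of_not_min s hs₀ hs)
      (hlt_of_not_min t ht₀ (mt ((hst i hi).2) hs))
    exact hlt.not_ge (isMinOn_iff.1 hK i₀ hi₀)
  · have ht := (hst i hi).1 hs
    exact isMinOn_iff.2 fun j hj =>
      hK_mono (isMinOn_iff.1 hs j hj) (isMinOn_iff.1 ht j hj)

namespace WithTop

variable {α β γ : Type*}

theorem map₂_le_map₂ [Preorder α] [Preorder β] [Preorder γ] {K : α → β → γ}
    (hK : ∀ ⦃x x' y y'⦄, x ≤ x' → y ≤ y' → K x y ≤ K x' y')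
    {x x' : WithTop α} {y y' : WithTop β} (hx : x ≤ x') (hy : y ≤ y') :
    map₂ K x y ≤ map₂ K x' y' := by
  induction x' with
  | top => exact le_top
  | coe a' =>
    induction y' with
    | top => exact le_top
    | coe b' =>
      lift x to α using fun h => not_top_le_coe a' (h ▸ hx)
      lift y to β using fun h => not_top_le_coe b' (h ▸ hy)
      exact coe_le_coe.2 (hK (coe_le_coe.1 hx) (coe_le_coe.1 hy))

theorem map₂_lt_map₂ [Preorder α] [Preorder β] [Preorder γ] {K : α → β → γ}
    (hK : ∀ ⦃x x' y y'⦄, x < x' → y < y' → K x y < K x' y')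
    {x x' : WithTop α} {y y' : WithTop β} (hx : x < x') (hy : y < y') :
    map₂ K x y < map₂ K x' y' := by
  lift x to α using hx.ne_top
  lift y to β using hy.ne_top
  induction x' <;> induction y' <;> try exact coe_lt_top _
  exact coe_lt_coe.2 (hK (coe_lt_coe.1 hx) (coe_lt_coe.1 hy))

theorem map₂_add_map₂ [Add α] [Add β] [Add γ] {h k : α → β → γ}
    (hadd : ∀ x y x' y', h x y + h x' y' = k (x + x') (y + y')) (x x' : WithTop α)
    (y y' : WithTop β) : map₂ h x y + map₂ h x' y' = map₂ k (x + x') (y + y') := by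
  induction x <;> induction y <;> induction x' <;> induction y' <;>
    first | rfl | exact coe_inj.2 (hadd _ _ _ _)

end WithTop

section CRealCoords

variable {E : Type*} {d : ℕ} {p : Finset E → Bool}

theorem extendFin_eq_top_iff (f : ↥(suppSet d p) → ℝ) (B : Finset E) :
    extendFin d p f B = ⊤ ↔ B ∉ suppSet d p := by
  unfold extendFin
  split <;> simp_all

theorem extendFin_comp₂ (h : ℝ → ℝ → ℝ) (f g : ↥(suppSet d p) → ℝ) (B : Finset E) :
    extendFin d p (fun b => h (f b) (g b)) B =
      WithTop.map₂ h (extendFin d p f B) (extendFin d p g B) := by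
  unfold extendFin
  split <;> rfl

variable [DecidableEq E] {I : Finset E → Finset E → Set E}

theorem mem_argminSet_iff {φ : Finset E → WithTop ℝ} {X Y : Finset E} {i : E} :
    i ∈ argminSet φ X Y ↔
      i ∈ X \ Y ∧ IsMinOn (fun j => φ (X.erase j) + φ (insert j Y)) ↑(X \ Y) i := by
  rw [isMinOn_iff]
  rfl

theorem mem_CRealCoords_of_argminSet_eq {f g : ↥(suppSet d p) → ℝ}
    (hf : f ∈ CRealCoords d p I)
    (hfg : ∀ X Y : Finset E, X.card = d + 1 → Y.card = d - 1 →
      argminSet (extendFin d p g) X Y = argminSet (extendFin d p f) X Y) :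
    g ∈ CRealCoords d p I := by
  have htop : ∀ B, extendFin d p g B ≠ ⊤ ↔ extendFin d p f B ≠ ⊤ := fun B => by
    simp only [ne_eq, extendFin_eq_top_iff]
  obtain ⟨⟨⟨B, hB, hfB⟩, hpair⟩, hsupp, hargmin⟩ := hf
  refine ⟨⟨⟨B, hB, (htop B).2 hfB⟩, fun X Y hX hY => ?_⟩, fun B' hB' => ?_,
    fun X Y hX hY => ?_⟩
  · rw [hfg X Y hX hY]
    exact hpair X Y hX hY
  · rw [hsupp B' hB', htop]
  · rw [hfg X Y hX hY]
    exact hargmin X Y hX hY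

theorem comp₂_mem_CRealCoords {f g : ↥(suppSet d p) → ℝ} (hf : f ∈ CRealCoords d p I)
    (hg : g ∈ CRealCoords d p I) {h k : ℝ → ℝ → ℝ}
    (hadd : ∀ x y x' y', h x y + h x' y' = k (x + x') (y + y'))
    (hk_mono : ∀ ⦃x x' y y'⦄, x ≤ x' → y ≤ y' → k x y ≤ k x' y')
    (hk_strict : ∀ ⦃x x' y y'⦄, x < x' → y < y' → k x y < k x' y') :
    (fun b => h (f b) (g b)) ∈ CRealCoords d p I := by
  refine mem_CRealCoords_of_argminSet_eq hf fun X Y hX hY => Set.ext fun i => ?_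
  have hfg : argminSet (extendFin d p f) X Y = argminSet (extendFin d p g) X Y :=
    (hf.2.2 X Y hX hY).trans (hg.2.2 X Y hX hY).symm
  obtain ⟨i₀, hi₀, -⟩ := hf.1.2 X Y hX hY
  simp only [mem_argminSet_iff, extendFin_comp₂, WithTop.map₂_add_map₂ hadd]
  refine and_congr_right fun hi => isMinOn_comp₂_iff
    (fun _ _ _ _ => WithTop.map₂_le_map₂ hk_mono) (fun _ _ _ _ => WithTop.map₂_lt_map₂ hk_strict)
    (fun j hj => ?_) ⟨i₀, mem_argminSet_iff.1 hi₀⟩ hi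
  have hj_iff := Set.ext_iff.1 hfg j
  rw [mem_argminSet_iff, mem_argminSet_iff] at hj_iff
  exact and_congr_right_iff.1 hj_iff hj

end CRealCoords

theorem statement6_general {E : Type*} [DecidableEq E] (d : ℕ)
    (p : Finset E → Bool) (I : Finset E → Finset E → Set E) :
    Convex ℝ (CRealCoords d p I) ∧
    (∀ f ∈ CRealCoords d p I, ∀ lam : ℝ,
      f + lam • (fun _ => (1:ℝ)) ∈ CRealCoords d p I) ∧
    ∀ f ∈ CRealCoords d p I, ∀ c : ℝ, 0 < c → c • f ∈ CRealCoords d p I := by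
  refine ⟨fun f hf g hg a b ha hb hab => ?_, fun f hf lam => ?_, fun f hf c hc => ?_⟩
  · refine comp₂_mem_CRealCoords (h := fun x y => a * x + b * y) (k := fun x y => a * x + b * y)
      hf hg (fun _ _ _ _ => by ring) (fun _ _ _ _ hx hy => by nlinarith) (fun _ _ _ _ hx hy => ?_)
    rcases ha.eq_or_lt with rfl | ha <;> nlinarith
  · have htranslate : f + lam • (fun _ => (1 : ℝ)) = fun b => f b + lam := by
      ext; simp
    rw [htranslate]
    exact comp₂_mem_CRealCoords (h := fun x _ => x + lam) (k := fun x _ => x + 2 * lam) hf hf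
      (fun _ _ _ _ => by ring) (fun _ _ _ _ hx _ => by linarith) (fun _ _ _ _ hx _ => by linarith)
  · exact comp₂_mem_CRealCoords (h := fun x _ => c * x) (k := fun x _ => c * x) hf hf
      (fun _ _ _ _ => by ring) (fun _ _ _ _ hx _ => by nlinarith) (fun _ _ _ _ hx _ => by nlinarith)

theorem statement6 {E : Type*} [Fintype E] [DecidableEq E] (d : ℕ) (hd : 1 ≤ d)
    (p : Finset E → Bool) (I : Finset E → Finset E → Set E)
    (hI : ∀ X Y : Finset E, I X Y ⊆ ↑(X \ Y)) :
    Convex ℝ (CRealCoords d p I) ∧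
    (∀ f ∈ CRealCoords d p I, ∀ lam : ℝ,
      f + lam • (fun _ => (1:ℝ)) ∈ CRealCoords d p I) ∧
    ∀ f ∈ CRealCoords d p I, ∀ c : ℝ, 0 < c → c • f ∈ CRealCoords d p I :=
  statement6_general d p I
end

section
/- Let E be a finite totally ordered set and d ≥ 1. Let χ be a chirotope of rank d on E and I an initial datum, and suppose D̃(χ,I) is nonempty. Then the map L : ℝ^{binom(E,d)} → 𝕋^{binom(E,d)} applying x ↦ −log|x| componentwise (with −log 0 = ∞) restricts to a homeomorphism from D̃(χ,I) onto C(|χ|,I), where |χ|(B) = |χ(B)|, 𝕋 carries the topology making x ↦ e^{−x} a homeomorphism onto [0,∞), and both sides carry the subspace topologies. -/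
open Finset

/-!
Since signs are prescribed by `χ`, the map `L = −log|·|` is injective on `D̃(χ, I)`, with inverse
`φ ↦ χ · e^{−φ}` on `C(|χ|, I)`; both maps are continuous coordinatewise for the topology induced
by `e^{−x}`. The point is that this inverse lands in `D̃(χ, I)`. For injective `X`, the terms of the
oriented Plücker relation at `(X, Y)` have absolute values `e^{−(φ(X∖i) + φ(Y∪i))}`, so the indices
of the largest terms are exactly those in `I(X, Y)`, and their signs are the signs of `χ`. Hence
`χ · e^{−φ}` has its largest terms at the same indices and with the same signs as any given
`Φ₀ ∈ D̃(χ, I)`, and satisfies the relation because `Φ₀` does. For non-injective `X` at most two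
terms are nonzero, and they have equal absolute values.
-/

open Function

namespace Real

lemma sign_mul (a b : ℝ) : sign (a * b) = sign a * sign b := by
  rcases lt_trichotomy a 0 with ha | rfl | ha <;> rcases lt_trichotomy b 0 with hb | rfl | hb <;>
    simp [sign_of_neg, sign_of_pos, mul_pos_of_neg_of_neg, mul_neg_of_neg_of_pos,
      mul_neg_of_pos_of_neg, *]

lemma sign_mul_abs (x : ℝ) : sign x * |x| = x := by
  rcases lt_trichotomy x 0 with hx | rfl | hx
  · rw [sign_of_neg hx, abs_of_neg hx, neg_one_mul, neg_neg]
  · simp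
  · rw [sign_of_pos hx, abs_of_pos hx, one_mul]

lemma sign_sign (x : ℝ) : sign (sign x) = sign x := by
  rcases sign_apply_eq x with h | h | h <;> simp [h, sign_of_neg, sign_one]

lemma sign_intCast_units (u : ℤˣ) : sign ((u : ℤ) : ℝ) = ((u : ℤ) : ℝ) := by
  rcases Int.units_eq_one_or u with rfl | rfl <;> simp [sign_of_neg, sign_one]

lemma abs_sign_of_ne_zero {x : ℝ} (hx : x ≠ 0) : |sign x| = 1 := by
  rcases sign_apply_eq_of_ne_zero x hx with h | h <;> simp [h]

lemma eq_zero_iff_of_sign_eq {x y : ℝ} (h : sign x = sign y) : x = 0 ↔ y = 0 := by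
  rw [← sign_eq_zero_iff, h, sign_eq_zero_iff]

lemma pos_of_sign_eq {x y : ℝ} (h : sign x = sign y) (hx : 0 < x) : 0 < y := by
  by_contra hy
  rcases (not_lt.mp hy).lt_or_eq with hy | rfl
  · rw [sign_of_pos hx, sign_of_neg hy] at h; norm_num at h
  · rw [sign_of_pos hx, sign_zero] at h; norm_num at h

lemma neg_of_sign_eq {x y : ℝ} (h : sign x = sign y) (hx : x < 0) : y < 0 :=
  neg_pos.mp <| pos_of_sign_eq (x := -x) (by rw [sign_neg, sign_neg, h]) (neg_pos.mpr hx)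

end Real

lemma tropToReal_top : tropToReal ⊤ = 0 := rfl

lemma tropToReal_coe (r : ℝ) : tropToReal r = Real.exp (-r) := rfl

lemma tropToReal_nonneg (w : WithTop ℝ) : 0 ≤ tropToReal w := by
  induction w using WithTop.recTopCoe with
  | top => exact le_rfl
  | coe r => exact (Real.exp_pos _).le

lemma tropToReal_eq_zero_iff {w : WithTop ℝ} : tropToReal w = 0 ↔ w = ⊤ := by
  induction w using WithTop.recTopCoe with
  | top => simp [tropToReal_top]
  | coe r => simp [tropToReal_coe, (Real.exp_pos _).ne']

lemma tropToReal_pos_iff {w : WithTop ℝ} : 0 < tropToReal w ↔ w ≠ ⊤ := by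
  rw [(tropToReal_nonneg w).lt_iff_ne', Ne, tropToReal_eq_zero_iff]

lemma tropToReal_add (a b : WithTop ℝ) : tropToReal (a + b) = tropToReal a * tropToReal b := by
  induction a using WithTop.recTopCoe with
  | top => simp [tropToReal_top]
  | coe r =>
    induction b using WithTop.recTopCoe with
    | top => simp [tropToReal_top]
    | coe s => rw [← WithTop.coe_add, tropToReal_coe, tropToReal_coe, tropToReal_coe, neg_add,
        Real.exp_add]

lemma tropToReal_strictAnti : StrictAnti tropToReal := by
  intro a b hab
  induction b using WithTop.recTopCoe with
  | top =>
    lift a to ℝ using hab.ne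
    exact Real.exp_pos _
  | coe s =>
    lift a to ℝ using (hab.trans (WithTop.coe_lt_top s)).ne
    exact Real.exp_lt_exp.mpr (neg_lt_neg (WithTop.coe_lt_coe.mp hab))

lemma negLogAbs_eq_top {x : ℝ} : negLogAbs x = ⊤ ↔ x = 0 := by
  unfold negLogAbs
  split_ifs with h <;> simp [h]

lemma negLogAbs_abs (x : ℝ) : negLogAbs |x| = negLogAbs x := by
  simp [negLogAbs]

lemma tropToReal_negLogAbs (x : ℝ) : tropToReal (negLogAbs x) = |x| := by
  unfold negLogAbs
  split_ifs with h
  · simp [tropToReal_top, h]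
  · rw [tropToReal_coe, neg_neg, Real.exp_log (abs_pos.mpr h)]

lemma negLogAbs_tropToReal (w : WithTop ℝ) : negLogAbs (tropToReal w) = w :=
  tropToReal_strictAnti.injective <| by
    rw [tropToReal_negLogAbs, abs_of_nonneg (tropToReal_nonneg w)]

lemma continuous_negLogAbs :
    @Continuous ℝ (WithTop ℝ) _ (.induced tropToReal inferInstance) negLogAbs :=
  continuous_induced_rng.mpr (by simpa only [comp_def, tropToReal_negLogAbs] using continuous_abs)

lemma abs_sign_mul_tropToReal {a : ℝ} {w : WithTop ℝ} (h : a = 0 ↔ w = ⊤) :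
    |Real.sign a * tropToReal w| = tropToReal w := by
  by_cases ha : a = 0
  · simp [ha, h.mp ha, tropToReal_top]
  · rw [abs_mul, Real.abs_sign_of_ne_zero ha, one_mul, abs_of_nonneg (tropToReal_nonneg w)]

open Function

section Tuples

variable {E : Type*} [LinearOrder E] {d : ℕ}

lemma eq_or_eq_of_injective_comp_succAbove {α : Type*} {X : Fin (d + 1) → α}
    {a b k : Fin (d + 1)} (hab : a ≠ b) (hX : X a = X b) (hk : Injective (X ∘ k.succAbove)) :
    k = a ∨ k = b := by
  by_contra! h
  obtain ⟨a', rfl⟩ := Fin.exists_succAbove_eq h.1.symm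
  obtain ⟨b', rfl⟩ := Fin.exists_succAbove_eq h.2.symm
  exact hab (congrArg _ (hk hX))

lemma card_image_univ_eq_iff {z : Fin d → E} : (univ.image z).card = d ↔ Injective z := by
  rw [← Set.injOn_univ, ← coe_univ, ← card_image_iff, card_univ, Fintype.card_fin]

lemma image_finsetTuple {B : Finset E} (h : B.card = d) : univ.image (finsetTuple B h) = B := by
  ext e
  simp only [mem_image, mem_univ, true_and, finsetTuple]
  exact ⟨fun ⟨i, hi⟩ => hi ▸ (B.orderIsoOfFin h i).2,
    fun he => ⟨(B.orderIsoOfFin h).symm ⟨e, he⟩, by simp⟩⟩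

lemma injective_finsetTuple {B : Finset E} (h : B.card = d) : Injective (finsetTuple B h) :=
  fun _ _ hij => (B.orderIsoOfFin h).injective (Subtype.ext hij)

lemma image_comp_succAbove {X : Fin (d + 1) → E} (hX : Injective X) (k : Fin (d + 1)) :
    univ.image (X ∘ k.succAbove) = (univ.image X).erase (X k) := by
  rw [← image_image, Fin.image_succAbove_univ, compl_singleton, image_erase hX]

lemma image_comp_succAbove_of_apply_eq {X : Fin (d + 1) → E} {p q : Fin (d + 1)} (hpq : p ≠ q)
    (h : X p = X q) : univ.image (X ∘ p.succAbove) = univ.image X := by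
  refine (image_subset_iff.mpr fun j _ => mem_image_of_mem X (mem_univ _)).antisymm ?_
  refine image_subset_iff.mpr fun j _ => ?_
  by_cases hj : j = p
  · subst hj
    obtain ⟨q', rfl⟩ := Fin.exists_succAbove_eq hpq.symm
    exact mem_image.mpr ⟨q', mem_univ _, h.symm⟩
  · obtain ⟨j', rfl⟩ := Fin.exists_succAbove_eq hj
    exact mem_image_of_mem _ (mem_univ j')

lemma image_cons_cast {n : ℕ} (hn : d = n + 1) (a : E) (Y : Fin n → E) :
    univ.image (Fin.cons a Y ∘ Fin.cast hn) = insert a (univ.image Y) := by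
  subst hn
  ext e
  simp [Fin.exists_fin_succ, eq_comm]

end Tuples

section Alternating

variable {E : Type*} [LinearOrder E] {d n : ℕ} {Φ : (Fin d → E) → ℝ}

lemma evalOn_of_card_eq {B : Finset E} (h : B.card = d) : evalOn Φ B = Φ (finsetTuple B h) :=
  dif_pos h

lemma tropOf_of_card_ne {B : Finset E} (h : B.card ≠ d) : tropOf Φ B = ⊤ := by
  rw [tropOf, evalOn, dif_neg h, negLogAbs_eq_top]

/-- The increasing enumeration of the image of an injective tuple is a permutation of it. -/
lemma abs_evalOn_image (hΦ : IsAlternating Φ) (z : Fin d → E) :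
    |evalOn Φ (univ.image z)| = |Φ z| := by
  by_cases hz : Injective z
  · have hcard : (univ.image z).card = d := card_image_univ_eq_iff.mpr hz
    have hsort : z ∘ Tuple.sort z = finsetTuple (univ.image z) hcard := by
      funext i
      rw [finsetTuple, coe_orderIsoOfFin_apply]
      exact congrFun (orderEmbOfFin_unique hcard (fun i => mem_image_of_mem z (mem_univ _))
        ((Tuple.monotone_sort z).strictMono_of_injective (hz.comp (Equiv.injective _)))) i
    rw [evalOn_of_card_eq hcard, ← hsort, hΦ.1, abs_mul, abs_unit_intCast, one_mul]
  · rw [evalOn, dif_neg (mt card_image_univ_eq_iff.mp hz), hΦ.2 z hz]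

lemma tropOf_image (hΦ : IsAlternating Φ) (z : Fin d → E) :
    tropOf Φ (univ.image z) = negLogAbs (Φ z) := by
  rw [tropOf, ← negLogAbs_abs, abs_evalOn_image hΦ, negLogAbs_abs]

lemma abs_delTerm (hn : d = n + 1) (hΦ : IsAlternating Φ) (X : Fin (d + 1) → E) (Y : Fin n → E)
    (k : Fin (d + 1)) :
    |delTerm hn Φ X Y k| = tropToReal (tropOf Φ (univ.image (X ∘ k.succAbove)) +
      tropOf Φ (insert (X k) (univ.image Y))) := by
  rw [tropToReal_add, ← image_cons_cast hn, tropOf_image hΦ, tropOf_image hΦ,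
    tropToReal_negLogAbs, tropToReal_negLogAbs]
  simp [delTerm, abs_mul]

lemma injective_cons_of_delTerm_ne_zero (hn : d = n + 1) (hΦ : IsAlternating Φ)
    {X : Fin (d + 1) → E} {Y : Fin n → E} {k : Fin (d + 1)} (hk : delTerm hn Φ X Y k ≠ 0) :
    Injective (Fin.cons (X k) Y : Fin (n + 1) → E) := by
  subst hn
  by_contra h
  exact hk (by simp [delTerm, hΦ.2 _ h])

lemma notMem_image_of_delTerm_ne_zero (hn : d = n + 1) (hΦ : IsAlternating Φ)
    {X : Fin (d + 1) → E} {Y : Fin n → E} {k : Fin (d + 1)} (hk : delTerm hn Φ X Y k ≠ 0) :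
    X k ∉ univ.image Y := by
  simpa using (Fin.cons_injective_iff.mp (injective_cons_of_delTerm_ne_zero hn hΦ hk)).1

lemma mem_argminSet_tropOf_iff (hn : d = n + 1) (hΦ : IsAlternating Φ) {X : Fin (d + 1) → E}
    (hX : Injective X) (Y : Fin n → E) {k : Fin (d + 1)} (hkY : X k ∉ univ.image Y) :
    X k ∈ argminSet (tropOf Φ) (univ.image X) (univ.image Y) ↔
      ∀ l, |delTerm hn Φ X Y l| ≤ |delTerm hn Φ X Y k| := by
  simp only [abs_delTerm hn hΦ, image_comp_succAbove hX, tropToReal_strictAnti.le_iff_ge]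
  refine ⟨fun hmin l => ?_, fun hmax => ⟨mem_sdiff.mpr ⟨mem_image_of_mem X (mem_univ k), hkY⟩, ?_⟩⟩
  · by_cases hlY : X l ∈ univ.image Y
    · have hcard : (insert (X l) (univ.image Y)).card ≠ d := by
        rw [insert_eq_of_mem hlY]
        have := card_image_le (s := univ) (f := Y)
        rw [card_univ, Fintype.card_fin] at this
        omega
      rw [tropOf_of_card_ne hcard, add_top]
      exact le_top
    · exact hmin.2 _ (mem_sdiff.mpr ⟨mem_image_of_mem X (mem_univ l), hlY⟩)
  · intro j hj
    obtain ⟨l, -, rfl⟩ := mem_image.mp (mem_sdiff.mp hj).1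
    exact hmax l

lemma abs_delTerm_le_of_not_injective (hn : d = n + 1) (hΦ : IsAlternating Φ)
    {X : Fin (d + 1) → E} (hX : ¬ Injective X) (Y : Fin n → E) {k : Fin (d + 1)}
    (hk : delTerm hn Φ X Y k ≠ 0) (l : Fin (d + 1)) :
    |delTerm hn Φ X Y l| ≤ |delTerm hn Φ X Y k| := by
  by_cases hl : delTerm hn Φ X Y l = 0
  · simp [hl]
  obtain ⟨a, b, hXab, hab⟩ := not_injective_iff.mp hX
  have himage : ∀ j, delTerm hn Φ X Y j ≠ 0 →
      univ.image (X ∘ j.succAbove) = univ.image X ∧ X j = X a := by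
    intro j hj
    have hinj : Injective (X ∘ j.succAbove) := by
      by_contra h
      exact hj (by simp [delTerm, hΦ.2 _ h])
    rcases eq_or_eq_of_injective_comp_succAbove hab hXab hinj with rfl | rfl
    · exact ⟨image_comp_succAbove_of_apply_eq hab hXab, rfl⟩
    · exact ⟨image_comp_succAbove_of_apply_eq hab.symm hXab.symm, hXab.symm⟩
  rw [abs_delTerm hn hΦ, abs_delTerm hn hΦ, (himage k hk).1, (himage l hl).1, (himage k hk).2,
    (himage l hl).2]

end Alternating

/-- The condition `IsOrientedTP` imposes on the list of terms of each Plücker relation. -/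
def AttainsMaxAbsWithBothSigns {ι : Type*} (t : ι → ℝ) : Prop :=
  (∀ i, t i = 0) ∨
    ∃ ip im, 0 < t ip ∧ t im < 0 ∧ (∀ k, |t k| ≤ t ip) ∧ ∀ k, |t k| ≤ -t im

lemma AttainsMaxAbsWithBothSigns.of_sign_eq {ι : Type*} {t t' : ι → ℝ}
    (h : AttainsMaxAbsWithBothSigns t) (hsign : ∀ k, Real.sign (t k) = Real.sign (t' k))
    (hmax : ∀ k, t k ≠ 0 → (∀ l, |t l| ≤ |t k|) → ∀ l, |t' l| ≤ |t' k|) :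
    AttainsMaxAbsWithBothSigns t' := by
  rcases h with h0 | ⟨ip, im, hp, hm, hpmax, hmmax⟩
  · exact Or.inl fun i => (Real.eq_zero_iff_of_sign_eq (hsign i)).mp (h0 i)
  have hp' := Real.pos_of_sign_eq (hsign ip) hp
  have hm' := Real.neg_of_sign_eq (hsign im) hm
  refine Or.inr ⟨ip, im, hp', hm', fun l => ?_, fun l => ?_⟩
  · simpa only [abs_of_pos hp'] using
      hmax ip hp.ne' (fun l => (abs_of_pos hp).symm ▸ hpmax l) l
  · simpa only [abs_of_neg hm'] using
      hmax im hm.ne (fun l => (abs_of_neg hm).symm ▸ hmmax l) l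

section Transfer

variable {E : Type*} [LinearOrder E] {d : ℕ}

/-- The largest Plücker terms of `Φ` and `Ψ` sit at the same indices, with the same signs. -/
theorem IsOrientedTP.of_sign_eq_of_argminSet_eq {Φ Ψ : (Fin d → E) → ℝ}
    (hΦ : IsOrientedTP d Φ) (hΨ : IsAlternating Ψ)
    (hsign : ∀ x, Real.sign (Φ x) = Real.sign (Ψ x))
    (hargmin : ∀ X Y : Finset E, X.card = d + 1 → Y.card = d - 1 →
      argminSet (tropOf Φ) X Y = argminSet (tropOf Ψ) X Y) :
    IsOrientedTP d Ψ := by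
  obtain ⟨hΦalt, ⟨x, hx⟩, hrel⟩ := hΦ
  refine ⟨hΨ, ⟨x, (Real.eq_zero_iff_of_sign_eq (hsign x)).not.mp hx⟩, fun n hn X Y => ?_⟩
  have hsignT : ∀ k, Real.sign (delTerm hn Φ X Y k) = Real.sign (delTerm hn Ψ X Y k) := by
    simp only [delTerm, Real.sign_mul, hsign, implies_true]
  refine AttainsMaxAbsWithBothSigns.of_sign_eq (t := delTerm hn Φ X Y) (hrel n hn X Y) hsignT
    fun k hk hmax => ?_
  by_cases hX : Injective X
  · have hkY := notMem_image_of_delTerm_ne_zero hn hΦalt hk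
    have hY := (Fin.cons_injective_iff.mp (injective_cons_of_delTerm_ne_zero hn hΦalt hk)).2
    have hXc : (univ.image X).card = d + 1 := card_image_univ_eq_iff.mpr hX
    have hYc : (univ.image Y).card = d - 1 := by rw [card_image_univ_eq_iff.mpr hY]; omega
    rw [← mem_argminSet_tropOf_iff hn hΨ hX Y hkY, ← hargmin _ _ hXc hYc]
    exact (mem_argminSet_tropOf_iff hn hΦalt hX Y hkY).mpr hmax
  · exact abs_delTerm_le_of_not_injective hn hΨ hX Y
      ((Real.eq_zero_iff_of_sign_eq (hsignT k)).not.mp hk)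

theorem IsOrientedTP.isTropPlucker_tropOf (hd : 1 ≤ d) {Φ : (Fin d → E) → ℝ}
    (hΦ : IsOrientedTP d Φ) : IsTropPlucker d (tropOf Φ) := by
  obtain ⟨hΦalt, ⟨x, hx⟩, hrel⟩ := hΦ
  have hxinj : Injective x := by
    by_contra h
    exact hx (hΦalt.2 x h)
  refine ⟨⟨univ.image x, card_image_univ_eq_iff.mpr hxinj, ?_⟩, fun X Y hX hY => ?_⟩
  · rw [tropOf_image hΦalt, Ne, negLogAbs_eq_top]
    exact hx
  obtain ⟨n, hn⟩ : ∃ n, d = n + 1 := ⟨d - 1, by omega⟩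
  have hYn : Y.card = n := by omega
  set X' := finsetTuple X hX
  set Y' := finsetTuple Y hYn
  have hmem : ∀ k, X' k ∉ univ.image Y' → (∀ l, |delTerm hn Φ X' Y' l| ≤ |delTerm hn Φ X' Y' k|) →
      X' k ∈ argminSet (tropOf Φ) X Y := by
    intro k hkY hmax
    simpa only [X', Y', image_finsetTuple] using
      (mem_argminSet_tropOf_iff hn hΦalt (injective_finsetTuple hX) Y' hkY).mpr hmax
  rcases hrel n hn X' Y' with h0 | ⟨ip, im, hp, hm, hpmax, hmmax⟩
  · have hall : ∀ e ∈ X \ Y, e ∈ argminSet (tropOf Φ) X Y := by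
      intro e he
      obtain ⟨k, -, rfl⟩ := mem_image.mp ((image_finsetTuple hX).symm ▸ (mem_sdiff.mp he).1)
      exact hmem k (by simpa [Y', image_finsetTuple] using (mem_sdiff.mp he).2) (by simp [h0])
    obtain ⟨a, ha, b, hb, hab⟩ := one_lt_card.mp
      (show 1 < (X \ Y).card by have := le_card_sdiff Y X; omega)
    exact ⟨a, hall a ha, b, hall b hb, hab⟩
  · refine ⟨X' ip, hmem ip (notMem_image_of_delTerm_ne_zero hn hΦalt hp.ne') fun l => ?_,
      X' im, hmem im (notMem_image_of_delTerm_ne_zero hn hΦalt hm.ne) fun l => ?_,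
      fun h => hp.not_gt (injective_finsetTuple hX h ▸ hm)⟩
    · exact (hpmax l).trans (le_abs_self _)
    · exact (hmmax l).trans (neg_le_abs _)

end Transfer

section OrientedLift

variable {E : Type*} [LinearOrder E] {d : ℕ}

/-- The inverse of `L = −log|·|` on `C(|χ|, I)`, for `χ = sign ∘ Φ₀`. -/
noncomputable def orientedLift (Φ₀ : (Fin d → E) → ℝ) (ψ : Finset E → WithTop ℝ) :
    (Fin d → E) → ℝ :=
  fun x => Real.sign (Φ₀ x) * tropToReal (ψ (univ.image x))

variable {Φ₀ : (Fin d → E) → ℝ} {ψ : Finset E → WithTop ℝ}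

lemma isAlternating_orientedLift (hΦ₀ : IsAlternating Φ₀) :
    IsAlternating (orientedLift Φ₀ ψ) := by
  refine ⟨fun σ x => ?_, fun x hx => by simp [orientedLift, hΦ₀.2 x hx]⟩
  rw [orientedLift, orientedLift, hΦ₀.1, Real.sign_mul, Real.sign_intCast_units, ← image_image,
    image_univ_equiv, mul_assoc]

lemma eq_zero_iff_of_tropOf_eq_top_iff (hΦ₀ : IsAlternating Φ₀)
    (hsupp : ∀ B, ψ B = ⊤ ↔ tropOf Φ₀ B = ⊤) (x : Fin d → E) :
    Φ₀ x = 0 ↔ ψ (univ.image x) = ⊤ := by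
  rw [hsupp, tropOf_image hΦ₀, negLogAbs_eq_top]

lemma sign_orientedLift (hΦ₀ : IsAlternating Φ₀) (hsupp : ∀ B, ψ B = ⊤ ↔ tropOf Φ₀ B = ⊤)
    (x : Fin d → E) : Real.sign (orientedLift Φ₀ ψ x) = Real.sign (Φ₀ x) := by
  by_cases hx : Φ₀ x = 0
  · simp [orientedLift, hx]
  have hpos : 0 < tropToReal (ψ (univ.image x)) :=
    tropToReal_pos_iff.mpr ((eq_zero_iff_of_tropOf_eq_top_iff hΦ₀ hsupp x).not.mp hx)
  rw [orientedLift, Real.sign_mul, Real.sign_sign, Real.sign_of_pos hpos, mul_one]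

lemma tropOf_orientedLift (hΦ₀ : IsAlternating Φ₀) (hsupp : ∀ B, ψ B = ⊤ ↔ tropOf Φ₀ B = ⊤) :
    tropOf (orientedLift Φ₀ ψ) = ψ := by
  funext B
  by_cases hB : B.card = d
  · rw [← image_finsetTuple hB, tropOf_image (isAlternating_orientedLift hΦ₀), ← negLogAbs_abs,
      orientedLift, abs_sign_mul_tropToReal (eq_zero_iff_of_tropOf_eq_top_iff hΦ₀ hsupp _),
      negLogAbs_tropToReal]
  · rw [tropOf_of_card_ne hB, eq_comm, hsupp, tropOf_of_card_ne hB]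

lemma orientedLift_tropOf {Φ : (Fin d → E) → ℝ} (hΦ : IsAlternating Φ)
    (hsign : ∀ x, Real.sign (Φ₀ x) = Real.sign (Φ x)) : orientedLift Φ₀ (tropOf Φ) = Φ := by
  funext x
  rw [orientedLift, tropOf_image hΦ, tropToReal_negLogAbs, hsign, Real.sign_mul_abs]

end OrientedLift

section Coordinates

variable {E : Type*} [LinearOrder E] {d : ℕ} {χ : (Fin d → E) → ℝ}
  {I : Finset E → Finset E → Set E}

lemma chiSupp_eq_true_iff {Φ : (Fin d → E) → ℝ} (hsign : ∀ x, Real.sign (Φ x) = χ x)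
    {B : Finset E} (hB : B.card = d) : chiSupp χ B = true ↔ tropOf Φ B ≠ ⊤ := by
  rw [chiSupp, tropOf, evalOn_of_card_eq hB, evalOn_of_card_eq hB, ← hsign, Ne, negLogAbs_eq_top]
  simp [Real.sign_eq_zero_iff]

lemma negLogAbs_toCoords (Φ : (Fin d → E) → ℝ) (B : {B : Finset E // B.card = d}) :
    negLogAbs (toCoords d Φ B) = tropOf Φ B := by
  rw [tropOf, evalOn_of_card_eq B.2]
  rfl

lemma extendTrop_negLogAbs_toCoords (Φ : (Fin d → E) → ℝ) :
    extendTrop d (fun B => negLogAbs (toCoords d Φ B)) = tropOf Φ := by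
  funext B
  by_cases hB : B.card = d
  · rw [extendTrop, dif_pos hB, negLogAbs_toCoords]
  · rw [extendTrop, dif_neg hB, tropOf_of_card_ne hB]

lemma negLogAbs_mem_Cset (hd : 1 ≤ d) {f : {B : Finset E // B.card = d} → ℝ}
    (hf : f ∈ DsetCoords d χ I) : (fun B => negLogAbs (f B)) ∈ Cset d (chiSupp χ) I := by
  obtain ⟨Φ, ⟨hΦ, hsign, hargmin⟩, rfl⟩ := hf
  show IsInC d (chiSupp χ) I _
  rw [extendTrop_negLogAbs_toCoords]
  exact ⟨hΦ.isTropPlucker_tropOf hd, fun B hB => chiSupp_eq_true_iff hsign hB, hargmin⟩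

lemma extendTrop_eq_top_iff {Φ₀ : (Fin d → E) → ℝ} (hΦ₀ : Φ₀ ∈ Dset d χ I)
    {φ : {B : Finset E // B.card = d} → WithTop ℝ} (hφ : φ ∈ Cset d (chiSupp χ) I)
    (B : Finset E) : extendTrop d φ B = ⊤ ↔ tropOf Φ₀ B = ⊤ := by
  by_cases hB : B.card = d
  · rw [← not_iff_not, ← Ne, ← hφ.2.1 B hB, chiSupp_eq_true_iff hΦ₀.2.1 hB]
  · rw [extendTrop, dif_neg hB, tropOf_of_card_ne hB]

lemma orientedLift_mem_Dset {Φ₀ : (Fin d → E) → ℝ} (hΦ₀ : Φ₀ ∈ Dset d χ I)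
    {φ : {B : Finset E // B.card = d} → WithTop ℝ} (hφ : φ ∈ Cset d (chiSupp χ) I) :
    orientedLift Φ₀ (extendTrop d φ) ∈ Dset d χ I := by
  have hsupp := extendTrop_eq_top_iff hΦ₀ hφ
  obtain ⟨hΦ₀, hsign₀, hargmin₀⟩ := hΦ₀
  obtain ⟨-, -, hargminφ⟩ := hφ
  have hsign := sign_orientedLift hΦ₀.1 hsupp
  have htrop := tropOf_orientedLift hΦ₀.1 hsupp
  refine ⟨hΦ₀.of_sign_eq_of_argminSet_eq (isAlternating_orientedLift hΦ₀.1)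
      (fun x => (hsign x).symm) fun X Y hX hY => ?_, fun x => (hsign x).trans (hsign₀ x),
      fun X Y hX hY => ?_⟩
  · rw [htrop, hargminφ X Y hX hY, hargmin₀ X Y hX hY]
  · rw [htrop, hargminφ X Y hX hY]

lemma toCoords_orientedLift_extendTrop (Φ₀ : (Fin d → E) → ℝ)
    (φ : {B : Finset E // B.card = d} → WithTop ℝ) (B : {B : Finset E // B.card = d}) :
    toCoords d (orientedLift Φ₀ (extendTrop d φ)) B =
      Real.sign (Φ₀ (finsetTuple B.1 B.2)) * tropToReal (φ B) := by
  rw [toCoords, orientedLift, image_finsetTuple, extendTrop, dif_pos B.2]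

end Coordinates

theorem statement9_general {E : Type*} [LinearOrder E] (d : ℕ) (hd : 1 ≤ d)
    (χ : (Fin d → E) → ℝ)
    (I : Finset E → Finset E → Set E)
    (hne : (Dset d χ I).Nonempty) :
    letI : TopologicalSpace (WithTop ℝ) := TopologicalSpace.induced tropToReal inferInstance
    ∃ e : ↥(DsetCoords d χ I) ≃ₜ ↥(Cset d (chiSupp χ) I),
      ∀ f : ↥(DsetCoords d χ I),
        ((e f : ↥(Cset d (chiSupp χ) I)) : {B : Finset E // B.card = d} → WithTop ℝ) =
          fun B => negLogAbs ((f : {B : Finset E // B.card = d} → ℝ) B) := by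
  let _ : TopologicalSpace (WithTop ℝ) := .induced tropToReal inferInstance
  obtain ⟨Φ₀, hΦ₀⟩ := hne
  refine ⟨{ toFun := fun f => ⟨fun B => negLogAbs (f.1 B), negLogAbs_mem_Cset hd f.2⟩
            invFun := fun φ => ⟨toCoords d (orientedLift Φ₀ (extendTrop d φ.1)),
              _, orientedLift_mem_Dset hΦ₀ φ.2, rfl⟩
            left_inv := ?_
            right_inv := ?_
            continuous_toFun := ?_
            continuous_invFun := ?_ }, fun f => rfl⟩
  · rintro ⟨_, Φ, hΦ, rfl⟩
    refine Subtype.ext ?_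
    simp only [extendTrop_negLogAbs_toCoords]
    rw [orientedLift_tropOf hΦ.1.1 fun x => (hΦ₀.2.1 x).trans (hΦ.2.1 x).symm]
  · rintro ⟨φ, hφ⟩
    refine Subtype.ext (funext fun B => ?_)
    show negLogAbs (toCoords d (orientedLift Φ₀ (extendTrop d φ)) B) = φ B
    rw [negLogAbs_toCoords, tropOf_orientedLift hΦ₀.1.1 (extendTrop_eq_top_iff hΦ₀ hφ), extendTrop,
      dif_pos B.2]
  · exact (continuous_pi fun B =>
      continuous_negLogAbs.comp ((continuous_apply B).comp continuous_subtype_val)).subtype_mk _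
  · refine (continuous_pi fun B => ?_).subtype_mk _
    simp only [toCoords_orientedLift_extendTrop]
    exact continuous_const.mul
      (continuous_induced_dom.comp ((continuous_apply B).comp continuous_subtype_val))

theorem statement9 {E : Type*} [Fintype E] [LinearOrder E] (d : ℕ) (hd : 1 ≤ d)
    (χ : (Fin d → E) → ℝ) (hχ : IsChirotope d χ)
    (I : Finset E → Finset E → Set E) (hI : ∀ X Y : Finset E, I X Y ⊆ ↑(X \ Y))
    (hne : (Dset d χ I).Nonempty) :
    letI : TopologicalSpace (WithTop ℝ) := TopologicalSpace.induced tropToReal inferInstance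
    ∃ e : ↥(DsetCoords d χ I) ≃ₜ ↥(Cset d (chiSupp χ) I),
      ∀ f : ↥(DsetCoords d χ I),
        ((e f : ↥(Cset d (chiSupp χ) I)) : {B : Finset E // B.card = d} → WithTop ℝ) =
          fun B => negLogAbs ((f : {B : Finset E // B.card = d} → ℝ) B) :=
  statement9_general d hd χ I hne
end
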